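/- arXiv:1905.04048 — 3 statements merged into one kernel-verified Lean document; each statement's English description precedes it below -/
import Mathlib

section
/- For (a,b,c) ∈ k³ \ {(0,0,0)}, the left Λ-module M(a,b,c) is torsionless if and only if either a ≠ 0 and a + q⁻¹b ≠ 0, or a = 0 and bc = 0. -/
open CategoryTheory Limits Opposite

/-- The algebra `Λ = Λ(q)` of Ringel–Zhang: a `k`-algebra with distinguished elements
`x, y, z` satisfying the defining relations
`x² = y² = z² = 0`, `yz = 0`, `xy + q·yx = 0`, `xz = zx`, `zy = zx`,
and admitting the `k`-basis `{1, x, y, z, yx, zx}`.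
Any such algebra is canonically isomorphic to the quotient of the free algebra
`k⟨x,y,z⟩` by the two-sided ideal generated by these relations. -/
structure LambdaAlg (k : Type) [Field k] (q : k) (Λ : Type) [Ring Λ] [Algebra k Λ] :
    Type where
  x : Λ
  y : Λ
  z : Λ
  hxx : x * x = 0
  hyy : y * y = 0
  hzz : z * z = 0
  hyz : y * z = 0
  hxy : x * y + q • (y * x) = 0
  hxz : x * z - z * x = 0
  hzy : z * y - z * x = 0
  basis : Module.Basis (Fin 6) k Λ
  hb0 : basis 0 = 1
  hb1 : basis 1 = x
  hb2 : basis 2 = y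
  hb3 : basis 3 = z
  hb4 : basis 4 = y * x
  hb5 : basis 5 = z * x

namespace LambdaAlg

variable {k : Type} [Field k] {q : k} {Λ : Type} [Ring Λ] [Algebra k Λ]

/-- The element `ax + by + cz` of `Λ`. -/
def w (D : LambdaAlg k q Λ) (a b c : k) : Λ := a • D.x + b • D.y + c • D.z

/-- The left ideal `U(a,b,c) = Λ(ax+by+cz) + Λ·yx + Λ·zx` of `Λ`. -/
def U (D : LambdaAlg k q Λ) (a b c : k) : Submodule Λ Λ :=
  Submodule.span Λ {D.w a b c, D.y * D.x, D.z * D.x}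

/-- The left `Λ`-module `M(a,b,c) = Λ/U(a,b,c)`. -/
abbrev M (D : LambdaAlg k q Λ) (a b c : k) : Type := Λ ⧸ D.U a b c

/-- The right ideal `U′(a,b,c) = (ax+by+cz)Λ + yx·Λ + zx·Λ` of `Λ`,
viewed as a `Λᵐᵒᵖ`-submodule of `Λ`. -/
def U' (D : LambdaAlg k q Λ) (a b c : k) : Submodule Λᵐᵒᵖ Λ :=
  Submodule.span Λᵐᵒᵖ {D.w a b c, D.y * D.x, D.z * D.x}

/-- The right `Λ`-module `M′(a,b,c) = Λ/U′(a,b,c)` (a module over `Λᵐᵒᵖ`). -/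
abbrev M' (D : LambdaAlg k q Λ) (a b c : k) : Type := Λ ⧸ D.U' a b c

/-- The `k`-subspace `{m ∈ M : x·m = y·m = z·m = 0}` of a left `Λ`-module `M`;
since `x, y, z` generate `rad Λ` and every simple `Λ`-module is isomorphic to `k`,
this is the socle of `M`. -/
def ann (D : LambdaAlg k q Λ) (M : Type) [AddCommGroup M] [Module k M] [Module Λ M]
    [IsScalarTower k Λ M] : Submodule k M where
  carrier := {m | D.x • m = 0 ∧ D.y • m = 0 ∧ D.z • m = 0}
  add_mem' := by
    rintro a b ⟨h1, h2, h3⟩ ⟨g1, g2, g3⟩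
    simp [smul_add, h1, h2, h3, g1, g2, g3]
  zero_mem' := by simp
  smul_mem' := by
    rintro a m ⟨h1, h2, h3⟩
    refine ⟨?_, ?_, ?_⟩ <;> rw [smul_comm] <;> simp [h1, h2, h3]

/-- The submodule `(rad Λ)·M = x·M + y·M + z·M` of a left `Λ`-module `M`. -/
def radM (D : LambdaAlg k q Λ) (M : Type) [AddCommGroup M] [Module Λ M] :
    Submodule Λ M :=
  Submodule.span Λ
    (Set.range (fun m : M => D.x • m) ∪ Set.range (fun m : M => D.y • m) ∪
      Set.range (fun m : M => D.z • m))

end LambdaAlg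

/-- A module is indecomposable if it is nonzero and is not the direct sum of two
nonzero submodules. -/
def IsIndecomposable (R : Type) [Ring R] (M : Type) [AddCommGroup M] [Module R M] :
    Prop :=
  Nontrivial M ∧
    ∀ N₁ N₂ : Submodule R M, N₁ ⊓ N₂ = ⊥ → N₁ ⊔ N₂ = ⊤ → N₁ = ⊥ ∨ N₂ = ⊥

/-- A module is torsionless if it admits an injective linear map into a finite free
module. -/
def IsTorsionless (R : Type) [Ring R] (M : Type) [AddCommGroup M] [Module R M] : Prop :=
  ∃ (n : ℕ) (f : M →ₗ[R] (Fin n → R)), Function.Injective f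

/-- The canonical evaluation map `M → M** = Hom_{Λᵒᵖ}(Hom_Λ(M, Λ), Λ)`,
sending `m` to `f ↦ f m`. -/
def evalMap (Λ : Type) [Ring Λ] (M : Type) [AddCommGroup M] [Module Λ M] :
    M → ((M →ₗ[Λ] Λ) →ₗ[Λᵐᵒᵖ] Λ) := fun m =>
  { toFun := fun f => f m
    map_add' := fun _ _ => rfl
    map_smul' := fun _ _ => rfl }

/-- The transformation `ω′(a,b,c) = (a, q⁻¹b, −((a+q⁻¹b)/a)·c)` on triples. -/
def omegaPrime {k : Type} [Field k] (q : k) (t : k × k × k) : k × k × k :=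
  (t.1, q⁻¹ * t.2.1, -((t.1 + q⁻¹ * t.2.1) / t.1) * t.2.2)

/-!
A cyclic module `R ⧸ I` is torsionless iff some finite family of elements of the right
annihilator of `I` has left annihilator exactly `I`. In `Λ` every element killing `yx`
(on either side) lies in `rad Λ`, and `rad Λ · rad Λ ⊆ soc Λ` is given by an explicit
bilinear formula in the coefficients of `x, y, z`. Hence both `U(a,b,c)` and its right
annihilator are controlled by their degree-one parts, and torsionlessness of `M(a,b,c)`
becomes linear algebra over `k`: it holds iff every degree-one `m` with `m·l = 0` for all
degree-one `l` with `(ax+by+cz)·l = 0` is a multiple of `ax+by+cz`. For `a ≠ 0` these `l`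
form the line spanned by `(qa², ab, −c(qa+b))`, which suffices exactly when `qa + b ≠ 0`
(otherwise it also kills `z`); for `a = 0` a single such `l` suffices when `bc = 0`, while
for `bc ≠ 0` all of them kill `y`.
-/

section Torsionless

variable {R : Type} [Ring R]

theorem mul_eq_zero_of_mem_span {S : Set R} {l : R} (hS : ∀ s ∈ S, s * l = 0) :
    ∀ u ∈ Submodule.span R S, u * l = 0 := by
  have : Submodule.span R S ≤ LinearMap.ker (LinearMap.toSpanSingleton R R l) :=
    Submodule.span_le.mpr hS
  exact fun u hu => this hu

theorem isTorsionless_quotient_iff (I : Submodule R R) :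
    IsTorsionless R (R ⧸ I) ↔ ∃ (n : ℕ) (l : Fin n → R),
      (∀ i, ∀ u ∈ I, u * l i = 0) ∧ ∀ m, (∀ i, m * l i = 0) → m ∈ I := by
  constructor
  · rintro ⟨n, f, hf⟩
    have hmk (m : R) (i : Fin n) : f (I.mkQ m) i = m * f (I.mkQ 1) i := by
      rw [← smul_eq_mul, ← Pi.smul_apply, ← map_smul, ← map_smul, smul_eq_mul, mul_one]
    refine ⟨n, fun i => f (I.mkQ 1) i, fun i u hu => ?_, fun m hm => ?_⟩
    · rw [← hmk, I.mkQ_apply, (Submodule.Quotient.mk_eq_zero I).mpr hu, map_zero, Pi.zero_apply]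
    · rw [← Submodule.Quotient.mk_eq_zero I, ← Submodule.mkQ_apply, ← map_eq_zero_iff f hf]
      exact funext fun i => (hmk m i).trans (hm i)
  · rintro ⟨n, l, hkill, hdet⟩
    let f : R →ₗ[R] Fin n → R := LinearMap.pi fun i => LinearMap.toSpanSingleton R R (l i)
    have hker : LinearMap.ker f = I := by
      ext m
      simp only [f, LinearMap.mem_ker, funext_iff, LinearMap.pi_apply,
        LinearMap.toSpanSingleton_apply, smul_eq_mul, Pi.zero_apply]
      exact ⟨hdet m, fun hm i => hkill i m hm⟩
    exact ⟨n, I.liftQ f hker.ge, LinearMap.ker_eq_bot.mp (I.ker_liftQ_eq_bot' f hker.symm)⟩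

theorem not_isTorsionless_quotient_of {I : Submodule R R} {m : R} (hm : m ∉ I)
    (h : ∀ l, (∀ u ∈ I, u * l = 0) → m * l = 0) : ¬ IsTorsionless R (R ⧸ I) := by
  rw [isTorsionless_quotient_iff]
  rintro ⟨n, l, hkill, hdet⟩
  exact hm (hdet m fun i => h (l i) (hkill i))

end Torsionless

namespace LambdaAlg

variable {k : Type} [Field k] {q : k} {Λ : Type} [Ring Λ] [Algebra k Λ] (D : LambdaAlg k q Λ)

def soc (t u : k) : Λ := t • (D.y * D.x) + u • (D.z * D.x)

lemma x_mul_y : D.x * D.y = -(q • (D.y * D.x)) := eq_neg_of_add_eq_zero_left D.hxy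
lemma x_mul_z : D.x * D.z = D.z * D.x := sub_eq_zero.mp D.hxz
lemma z_mul_y : D.z * D.y = D.z * D.x := sub_eq_zero.mp D.hzy

lemma mul_x_mul_x (r : Λ) : r * D.x * D.x = 0 := by rw [mul_assoc, D.hxx, mul_zero]
lemma mul_x_mul_y (r : Λ) : r * D.x * D.y = -(q • (r * D.y * D.x)) := by
  rw [mul_assoc, D.x_mul_y, mul_neg, mul_smul_comm, mul_assoc]
lemma mul_x_mul_z (r : Λ) : r * D.x * D.z = r * D.z * D.x := by
  rw [mul_assoc, D.x_mul_z, mul_assoc]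

lemma w_mul_w (a b c a' b' c' : k) :
    D.w a b c * D.w a' b' c' = D.soc (b * a' - q * a * b') (a * c' + c * a' + c * b') := by
  simp only [w, soc, add_mul, mul_add, smul_mul_assoc, mul_smul_comm, D.hxx, D.hyy, D.hzz, D.hyz,
    D.x_mul_y, D.x_mul_z, D.z_mul_y, smul_zero]
  module

lemma soc_eq_w_mul_w (t u : k) : D.soc t u = D.w 0 t u * D.w 1 0 0 := by
  rw [w_mul_w]
  congr 1 <;> ring

lemma soc_mul_w (t u a b c : k) : D.soc t u * D.w a b c = 0 := by
  simp [soc, w, add_mul, mul_add, D.mul_x_mul_x, D.mul_x_mul_y, D.mul_x_mul_z,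
    D.hyy, D.hyz, D.hzz, D.z_mul_y]

lemma w_mul_soc (a b c t u : k) : D.w a b c * D.soc t u = 0 := by
  rw [soc_eq_w_mul_w, ← mul_assoc, w_mul_w, soc_mul_w]

lemma soc_mul_soc (t u t' u' : k) : D.soc t u * D.soc t' u' = 0 := by
  rw [D.soc_eq_w_mul_w t', ← mul_assoc, soc_mul_w, zero_mul]

lemma exists_eq_smul_one_add_w_add_soc (m : Λ) :
    ∃ r a b c t u : k, m = r • 1 + D.w a b c + D.soc t u := by
  refine ⟨D.basis.repr m 0, D.basis.repr m 1, D.basis.repr m 2, D.basis.repr m 3,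
    D.basis.repr m 4, D.basis.repr m 5, ?_⟩
  conv_lhs => rw [← D.basis.sum_repr m]
  simp only [Fin.sum_univ_six, D.hb0, D.hb1, D.hb2, D.hb3, D.hb4, D.hb5, w, soc]
  abel

lemma w_add_soc_eq_zero_iff (a b c t u : k) :
    D.w a b c + D.soc t u = 0 ↔ a = 0 ∧ b = 0 ∧ c = 0 ∧ t = 0 ∧ u = 0 := by
  refine ⟨fun h => ?_, by rintro ⟨rfl, rfl, rfl, rfl, rfl⟩; simp [w, soc]⟩
  have key := Fintype.linearIndependent_iff.mp D.basis.linearIndependent ![0, a, b, c, t, u]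
    (by simpa [Fin.sum_univ_six, D.hb1, D.hb2, D.hb3, D.hb4, D.hb5, w, soc, add_assoc] using h)
  exact ⟨key 1, key 2, key 3, key 4, key 5⟩

lemma soc_eq_zero_iff (t u : k) : D.soc t u = 0 ↔ t = 0 ∧ u = 0 := by
  simpa [w] using D.w_add_soc_eq_zero_iff 0 0 0 t u

lemma w_mul_w_eq_zero_iff (a b c a' b' c' : k) : D.w a b c * D.w a' b' c' = 0 ↔
    b * a' - q * a * b' = 0 ∧ a * c' + c * a' + c * b' = 0 := by
  rw [w_mul_w, soc_eq_zero_iff]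

lemma smul_w (s a b c : k) : s • D.w a b c = D.w (s * a) (s * b) (s * c) := by
  simp only [w, smul_add, smul_smul]

lemma smul_one_add_w_add_soc_mul_soc (r a b c t u t' u' : k) :
    (r • 1 + D.w a b c + D.soc t u) * D.soc t' u' = D.soc (r * t') (r * u') := by
  rw [add_mul, add_mul, w_mul_soc, soc_mul_soc, smul_mul_assoc, one_mul]
  simp only [soc, smul_add, smul_smul, add_zero]

lemma soc_mul_smul_one_add_w_add_soc (t' u' r a b c t u : k) :
    D.soc t' u' * (r • 1 + D.w a b c + D.soc t u) = D.soc (r * t') (r * u') := by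
  rw [mul_add, mul_add, soc_mul_w, soc_mul_soc, mul_smul_comm, mul_one]
  simp only [soc, smul_add, smul_smul, add_zero, mul_comm r]

lemma y_mul_x : D.y * D.x = D.soc 1 0 := by simp [soc]
lemma z_mul_x : D.z * D.x = D.soc 0 1 := by simp [soc]

lemma exists_eq_w_add_soc_of_mul_soc_eq_zero {m : Λ} (h : m * D.soc 1 0 = 0) :
    ∃ a b c t u : k, m = D.w a b c + D.soc t u := by
  obtain ⟨r, a, b, c, t, u, rfl⟩ := D.exists_eq_smul_one_add_w_add_soc m
  rw [smul_one_add_w_add_soc_mul_soc, soc_eq_zero_iff, mul_one] at h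
  exact ⟨a, b, c, t, u, by rw [h.1, zero_smul, zero_add]⟩

lemma exists_eq_w_add_soc_of_soc_mul_eq_zero {l : Λ} (h : D.soc 1 0 * l = 0) :
    ∃ a b c t u : k, l = D.w a b c + D.soc t u := by
  obtain ⟨r, a, b, c, t, u, rfl⟩ := D.exists_eq_smul_one_add_w_add_soc l
  rw [soc_mul_smul_one_add_w_add_soc, soc_eq_zero_iff, mul_one] at h
  exact ⟨a, b, c, t, u, by rw [h.1, zero_smul, zero_add]⟩

variable {a b c : k}

lemma w_mem_U : D.w a b c ∈ D.U a b c := Submodule.subset_span (by simp)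

lemma soc_mem_U (t u : k) : D.soc t u ∈ D.U a b c := by
  have hyx : D.y * D.x ∈ D.U a b c := Submodule.subset_span (by simp)
  have hzx : D.z * D.x ∈ D.U a b c := Submodule.subset_span (by simp)
  exact add_mem (Submodule.smul_of_tower_mem _ t hyx) (Submodule.smul_of_tower_mem _ u hzx)

lemma mem_U_iff (m : Λ) : m ∈ D.U a b c ↔ ∃ s t u : k, m = s • D.w a b c + D.soc t u := by
  refine ⟨fun hm => ?_, ?_⟩
  · induction hm using Submodule.span_induction with
    | mem v hv =>
      rcases hv with rfl | rfl | rfl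
      · exact ⟨1, 0, 0, by simp [soc]⟩
      · exact ⟨0, 1, 0, by simp [soc]⟩
      · exact ⟨0, 0, 1, by simp [soc]⟩
    | zero => exact ⟨0, 0, 0, by simp [soc]⟩
    | add v v' _ _ ih ih' =>
      obtain ⟨s, t, u, rfl⟩ := ih
      obtain ⟨s', t', u', rfl⟩ := ih'
      exact ⟨s + s', t + t', u + u', by simp only [soc]; module⟩
    | smul l v _ ih =>
      obtain ⟨s, t, u, rfl⟩ := ih
      obtain ⟨r, a', b', c', t', u', rfl⟩ := D.exists_eq_smul_one_add_w_add_soc l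
      refine ⟨r * s, s * (b' * a - q * a' * b) + r * t, s * (a' * c + c' * a + c' * b) + r * u, ?_⟩
      rw [smul_eq_mul, mul_add, mul_smul_comm, smul_one_add_w_add_soc_mul_soc, add_mul, add_mul,
        smul_mul_assoc, one_mul, w_mul_w, soc_mul_w, add_zero]
      simp only [soc]
      module
  · rintro ⟨s, t, u, rfl⟩
    exact add_mem (Submodule.smul_of_tower_mem _ s D.w_mem_U) (D.soc_mem_U t u)

lemma w_mem_U_iff (a' b' c' : k) :
    D.w a' b' c' ∈ D.U a b c ↔ ∃ s : k, a' = s * a ∧ b' = s * b ∧ c' = s * c := by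
  rw [mem_U_iff]
  constructor
  · rintro ⟨s, t, u, h⟩
    have h0 : D.w (a' - s * a) (b' - s * b) (c' - s * c) + D.soc (-t) (-u) = 0 := by
      simp only [w, soc] at h ⊢
      linear_combination (norm := module) h
    obtain ⟨ha, hb, hc, -⟩ := (D.w_add_soc_eq_zero_iff _ _ _ _ _).mp h0
    exact ⟨s, sub_eq_zero.mp ha, sub_eq_zero.mp hb, sub_eq_zero.mp hc⟩
  · rintro ⟨s, rfl, rfl, rfl⟩
    exact ⟨s, 0, 0, by simp [smul_w, soc]⟩

lemma forall_mem_U_mul_eq_zero_iff (l : Λ) : (∀ u ∈ D.U a b c, u * l = 0) ↔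
    D.w a b c * l = 0 ∧ D.soc 1 0 * l = 0 ∧ D.soc 0 1 * l = 0 := by
  refine ⟨fun h => ⟨h _ D.w_mem_U, h _ (D.soc_mem_U 1 0), h _ (D.soc_mem_U 0 1)⟩, ?_⟩
  rintro ⟨hw, hyx, hzx⟩
  refine mul_eq_zero_of_mem_span ?_
  simp only [Set.mem_insert_iff, Set.mem_singleton_iff, forall_eq_or_imp, forall_eq, y_mul_x,
    z_mul_x]
  exact ⟨hw, hyx, hzx⟩

theorem isTorsionless_M_of (s₁ s₂ s₃ : k) (hs : D.w a b c * D.w s₁ s₂ s₃ = 0)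
    (hdet : ∀ r₁ r₂ r₃, D.w r₁ r₂ r₃ * D.w s₁ s₂ s₃ = 0 → D.w r₁ r₂ r₃ ∈ D.U a b c) :
    IsTorsionless Λ (D.M a b c) := by
  rw [isTorsionless_quotient_iff]
  refine ⟨2, ![D.soc 1 0, D.w s₁ s₂ s₃], fun i => ?_, fun m hm => ?_⟩
  · rw [forall_mem_U_mul_eq_zero_iff]
    fin_cases i
    · exact ⟨D.w_mul_soc .., D.soc_mul_soc .., D.soc_mul_soc ..⟩
    · exact ⟨hs, D.soc_mul_w .., D.soc_mul_w ..⟩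
  obtain ⟨r₁, r₂, r₃, t, u, rfl⟩ := D.exists_eq_w_add_soc_of_mul_soc_eq_zero (hm 0)
  have hr : D.w r₁ r₂ r₃ * D.w s₁ s₂ s₃ = 0 := by
    simpa only [Matrix.cons_val_one, Matrix.cons_val_zero, add_mul, soc_mul_w, add_zero] using hm 1
  exact add_mem (hdet r₁ r₂ r₃ hr) (D.soc_mem_U t u)

theorem not_isTorsionless_M_of (m₁ m₂ m₃ : k) (hm : D.w m₁ m₂ m₃ ∉ D.U a b c)
    (hkill : ∀ s₁ s₂ s₃, D.w a b c * D.w s₁ s₂ s₃ = 0 → D.w m₁ m₂ m₃ * D.w s₁ s₂ s₃ = 0) :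
    ¬ IsTorsionless Λ (D.M a b c) := by
  refine not_isTorsionless_quotient_of hm fun l hl => ?_
  obtain ⟨hw, hyx, -⟩ := (D.forall_mem_U_mul_eq_zero_iff l).mp hl
  obtain ⟨s₁, s₂, s₃, t, u, rfl⟩ := D.exists_eq_w_add_soc_of_soc_mul_eq_zero hyx
  rw [mul_add, w_mul_soc, add_zero] at hw ⊢
  exact hkill s₁ s₂ s₃ hw

theorem isTorsionless_M_of_add_ne_zero (hq : q ≠ 0) (ha : a ≠ 0) (hab : q * a + b ≠ 0) :
    IsTorsionless Λ (D.M a b c) := by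
  refine D.isTorsionless_M_of (q * a * a) (a * b) (-(c * (q * a + b)))
    ((D.w_mul_w_eq_zero_iff ..).mpr ⟨by ring, by ring⟩) fun r₁ r₂ r₃ h => ?_
  obtain ⟨h₂, h₃⟩ := (D.w_mul_w_eq_zero_iff ..).mp h
  have e₂ : a * r₂ = b * r₁ := mul_left_cancel₀ (mul_ne_zero hq ha) (by linear_combination h₂)
  have e₃ : a * r₃ = c * r₁ := mul_left_cancel₀ hab (by linear_combination h₃)
  refine (D.w_mem_U_iff _ _ _).mpr ⟨r₁ / a, ?_, ?_, ?_⟩ <;> field_simp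
  · linear_combination e₂
  · linear_combination e₃

theorem not_isTorsionless_M_of_add_eq_zero (hq : q ≠ 0) (ha : a ≠ 0) (hab : q * a + b = 0) :
    ¬ IsTorsionless Λ (D.M a b c) := by
  refine D.not_isTorsionless_M_of 0 0 1 (fun hm => ?_) fun s₁ s₂ s₃ h => ?_
  · obtain ⟨s, hs, -, hs'⟩ := (D.w_mem_U_iff _ _ _).mp hm
    have : s = 0 := (mul_eq_zero.mp hs.symm).resolve_right ha
    simp [this] at hs'
  · have h₁ := ((D.w_mul_w_eq_zero_iff ..).mp h).1
    have hs : s₁ + s₂ = 0 :=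
      mul_left_cancel₀ (mul_ne_zero hq ha) (by linear_combination -h₁ + s₁ * hab)
    exact (D.w_mul_w_eq_zero_iff ..).mpr ⟨by ring, by linear_combination hs⟩

theorem isTorsionless_M_zero_b_zero (hq : q ≠ 0) (hb : b ≠ 0) :
    IsTorsionless Λ (D.M 0 b 0) := by
  refine D.isTorsionless_M_of 0 1 0 ((D.w_mul_w_eq_zero_iff ..).mpr ⟨by ring, by ring⟩)
    fun r₁ r₂ r₃ h => ?_
  obtain ⟨h₁, h₃⟩ := (D.w_mul_w_eq_zero_iff ..).mp h
  have hr₁ : r₁ = 0 := by simpa [hq] using h₁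
  refine (D.w_mem_U_iff _ _ _).mpr ⟨r₂ / b, by simp [hr₁], by field_simp, by simpa using h₃⟩

theorem isTorsionless_M_zero_zero_c (hc : c ≠ 0) : IsTorsionless Λ (D.M 0 0 c) := by
  refine D.isTorsionless_M_of 1 (-1) 1 ((D.w_mul_w_eq_zero_iff ..).mpr ⟨by ring, by ring⟩)
    fun r₁ r₂ r₃ h => ?_
  obtain ⟨h₂, h₁⟩ := (D.w_mul_w_eq_zero_iff ..).mp h
  have hr₁ : r₁ = 0 := by linear_combination h₁
  refine (D.w_mem_U_iff _ _ _).mpr ⟨r₃ / c, by simp [hr₁], ?_, by field_simp⟩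
  linear_combination h₂ - q * hr₁

theorem not_isTorsionless_M_zero_b_c (hb : b ≠ 0) (hc : c ≠ 0) :
    ¬ IsTorsionless Λ (D.M 0 b c) := by
  refine D.not_isTorsionless_M_of 0 1 0 (fun hm => ?_) fun s₁ s₂ s₃ h => ?_
  · obtain ⟨s, -, hs, hs'⟩ := (D.w_mem_U_iff _ _ _).mp hm
    have : s = 0 := (mul_eq_zero.mp hs'.symm).resolve_right hc
    simp [this] at hs
  · obtain ⟨h₁, h₂⟩ := (D.w_mul_w_eq_zero_iff ..).mp h
    have hs₁ : s₁ = 0 := (mul_eq_zero.mp (by linear_combination h₁)).resolve_left hb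
    exact (D.w_mul_w_eq_zero_iff ..).mpr ⟨by linear_combination hs₁, by ring⟩

end LambdaAlg

/-- `M(a,b,c)` is torsionless iff either `a ≠ 0` and `a + q⁻¹b ≠ 0`, or `a = 0`
and `bc = 0`. -/
theorem statement11 (k : Type) [Field k] (q : k) (hq : q ≠ 0)
    (Λ : Type) [Ring Λ] [Algebra k Λ] (D : LambdaAlg k q Λ)
    (a b c : k) (h : (a, b, c) ≠ (0, 0, 0)) :
    IsTorsionless Λ (D.M a b c) ↔
      (a ≠ 0 ∧ a + q⁻¹ * b ≠ 0) ∨ (a = 0 ∧ b * c = 0) := by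
  rcases eq_or_ne a 0 with rfl | ha
  · rcases eq_or_ne b 0 with rfl | hb
    · have hc : c ≠ 0 := by rintro rfl; exact h rfl
      simpa using D.isTorsionless_M_zero_zero_c hc
    rcases eq_or_ne c 0 with rfl | hc
    · simpa using D.isTorsionless_M_zero_b_zero hq hb
    · simpa [hb, hc] using D.not_isTorsionless_M_zero_b_c hb hc
  · have hab : a + q⁻¹ * b = q⁻¹ * (q * a + b) := by field_simp
    rw [hab]
    by_cases hab' : q * a + b = 0
    · simpa [ha, hab'] using D.not_isTorsionless_M_of_add_eq_zero (c := c) hq ha hab'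
    · simpa [ha, hq, hab'] using D.isTorsionless_M_of_add_ne_zero (c := c) hq ha hab'
end

section
/- Let R be a ring and w ∈ R. If every homomorphism of left R-modules Rw → R maps w into the right ideal wR, then Hom_R(Rw, R) is isomorphic to wR as right R-modules (where Hom_R(Rw, R) carries the right R-module structure given by (f·r)(v) = f(v)·r). -/
open CategoryTheory Limits Opposite

/-! A map `f : Rw → R` is determined by `f w`, so evaluation at `w` embeds `Hom_R(Rw, R)` into
`R` as right modules. The image contains `wR`, since `v ↦ v r` sends `w` to `wr`, and it is
contained in `wR` by hypothesis. -/

namespace Submodule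

variable {R M N : Type*} [Ring R] [AddCommGroup M] [Module R M] [AddCommGroup N] [Module R N]

theorem linearMap_ext_span_singleton {w : M} {f g : span R {w} →ₗ[R] N}
    (h : f ⟨w, mem_span_singleton_self w⟩ = g ⟨w, mem_span_singleton_self w⟩) : f = g :=
  LinearMap.ext_on span_span_coe_preimage fun v hv => by
    obtain rfl : v = ⟨w, mem_span_singleton_self w⟩ := Subtype.ext hv
    exact h

theorem exists_linearMap_span_singleton_apply_eq {w v : R} (hv : v ∈ span Rᵐᵒᵖ {w}) :
    ∃ f : span R {w} →ₗ[R] R, f ⟨w, mem_span_singleton_self w⟩ = v := by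
  obtain ⟨s, rfl⟩ := mem_span_singleton.mp hv
  exact ⟨s • (span R {w}).subtype, rfl⟩

end Submodule

/-- If every left `R`-linear map `Rw → R` sends `w` into `wR`, then
`Hom_R(Rw, R) ≅ wR` as right `R`-modules. -/
theorem statement17 (R : Type) [Ring R] (w : R)
    (h : ∀ f : ↥(Submodule.span R {w}) →ₗ[R] R,
      f ⟨w, Submodule.mem_span_singleton_self w⟩ ∈ Submodule.span Rᵐᵒᵖ {w}) :
    Nonempty ((↥(Submodule.span R {w}) →ₗ[R] R) ≃ₗ[Rᵐᵒᵖ]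
      ↥(Submodule.span Rᵐᵒᵖ {w})) := by
  let generator : Submodule.span R {w} := ⟨w, Submodule.mem_span_singleton_self w⟩
  let evalAtGenerator := (LinearMap.applyₗ' Rᵐᵒᵖ generator).codRestrict _ h
  refine ⟨LinearEquiv.ofBijective evalAtGenerator ⟨fun f g hfg => ?_, fun ⟨v, hv⟩ => ?_⟩⟩
  · exact Submodule.linearMap_ext_span_singleton (congrArg Subtype.val hfg)
  · obtain ⟨f, hf⟩ := Submodule.exists_linearMap_span_singleton_apply_eq hv
    exact ⟨f, Subtype.ext hf⟩
end

section
/- Let b, c ∈ k with c ≠ 0. Then: (1) the right Λ-module M′(1,b,c) is torsionless (i.e., admits an injective right-Λ-linear map into some finite free right module Λⁿ) if and only if b ≠ −1; (2) M′(1,b,c) satisfies Ext¹(M′(1,b,c), Λ) = 0 in the category of right Λ-modules if and only if b ≠ −q. Moreover, in case (2) with b ≠ −q, the kernel of the projective cover Λ → M′(1,b,c), namely U′(1,b,c), is isomorphic as a right Λ-module to M′(ω′(1,b,c)), where ω′(1,b,c) = (1, q⁻¹b, −(1+q⁻¹b)·c). -/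
open CategoryTheory Limits Opposite

/-!
Write `w(β,γ) = x + βy + γz`. A computation in the basis `1, x, y, z, yx, zx` shows that left
multiplication by `w(β,γ)` has image `U′(1,β,γ)` and kernel `U′(ω′(1,β,γ))`. This gives the
isomorphism `U′(1,b,c) ≅ M′(ω′(1,b,c))` and a free resolution of `M′(1,b,c)` whose differentials
are left multiplications by `w(ω′ⁿ(1,b,c))`. Applying `Hom(-, Λ)` turns them into right
multiplications, so `Ext¹(M′(1,b,c), Λ) = 0` iff every `a` with `a · w(ω′(1,b,c)) = 0` lies in
`Λ · w(1,b,c) = U′(1,b,c)`; this fails exactly when `q⁻¹b = -1`, with `a = z`.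

For `b ≠ -1`, `(1,b,c) = ω′(1,qb,-c/(1+b))`, so `M′(1,b,c)` embeds into `Λ` by left
multiplication by `w(qb, -c/(1+b))`. For `b = -1` every map to a free module kills the class
of `z ∉ U′(1,-1,c)`, because `u · w(-1,c) = 0` forces `u · z = 0`.
-/

namespace CategoryTheory.ProjectiveResolution

variable {C : Type*} [Category C] [Abelian C]

noncomputable def ofExact {X : C} (P : ChainComplex C ℕ) [projective : ∀ n, Projective (P.X n)]
    (ε : P.X 0 ⟶ X) (hε : P.d 1 0 ≫ ε = 0) (exact₀ : (ShortComplex.mk _ _ hε).Exact) [epi : Epi ε]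
    (exact : ∀ n, P.ExactAt (n + 1)) : ProjectiveResolution X where
  complex := P
  π := (ChainComplex.toSingle₀Equiv _ _).symm ⟨ε, hε⟩
  quasiIso := ⟨fun n => by
    cases n with
    | zero =>
      rw [ChainComplex.quasiIsoAt₀_iff, ShortComplex.quasiIso_iff_of_zeros']
      · refine (ShortComplex.exact_and_epi_g_iff_of_iso ?_).2 ⟨exact₀, by dsimp; infer_instance⟩
        exact ShortComplex.isoMk (Iso.refl _) (Iso.refl _) (Iso.refl _)
          ((Category.id_comp _).trans (Category.comp_id _).symm)
          ((Category.id_comp _).trans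
            ((Category.comp_id _).trans (ChainComplex.toSingle₀Equiv_symm_apply_f_zero ε hε)).symm)
      · exact P.shape _ _ (by simp)
      all_goals rfl
    | succ n =>
      rw [quasiIsoAt_iff_exactAt']
      · exact exact n
      · exact ChainComplex.exactAt_succ_single_obj _ _⟩

variable {R : Type*} [Ring R] [Linear R C] [EnoughProjectives C]

lemma isZero_ext_succ_iff {X : C} (P : ProjectiveResolution X) (n : ℕ) (Y : C) :
    IsZero (((Ext R C (n + 1)).obj (op X)).obj Y) ↔
      ∀ g : P.complex.X (n + 1) ⟶ Y, P.complex.d (n + 2) (n + 1) ≫ g = 0 →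
        ∃ f : P.complex.X n ⟶ Y, P.complex.d (n + 1) n ≫ f = g := by
  rw [Iso.isZero_iff (P.isoExt (n + 1) Y), ← HomologicalComplex.exactAt_iff_isZero_homology,
    HomologicalComplex.exactAt_iff' _ n (n + 1) (n + 2) (by simp) (by simp),
    ShortComplex.moduleCat_exact_iff]
  rfl

end CategoryTheory.ProjectiveResolution

section RightModuleOverItself

variable {R : Type} [Ring R]

lemma LinearMap.apply_eq_apply_one_mul (f : R →ₗ[Rᵐᵒᵖ] R) (a : R) : f a = f 1 * a := by
  simpa using f.map_smul (MulOpposite.op a) 1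

lemma Submodule.Quotient.mk_eq_op_smul_mk_one (p : Submodule Rᵐᵒᵖ R) (a : R) :
    (Submodule.Quotient.mk a : R ⧸ p) = MulOpposite.op a • Submodule.Quotient.mk 1 := by
  rw [← Submodule.Quotient.mk_smul, MulOpposite.smul_eq_mul_unop, MulOpposite.unop_op, one_mul]

instance ModuleCat.projective_self_op : Projective (ModuleCat.of Rᵐᵒᵖ R) :=
  ModuleCat.projective_of_free
    ((Module.Basis.singleton (Fin 1) Rᵐᵒᵖ).map (MulOpposite.opLinearEquiv Rᵐᵒᵖ).symm)

lemma ModuleCat.ofHom_mulLeft_comp (u : R) (g : ModuleCat.of Rᵐᵒᵖ R ⟶ ModuleCat.of Rᵐᵒᵖ R) :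
    ModuleCat.ofHom (LinearMap.mulLeft Rᵐᵒᵖ u) ≫ g
      = ModuleCat.ofHom (LinearMap.mulLeft Rᵐᵒᵖ (g.hom 1 * u)) :=
  ModuleCat.hom_ext (LinearMap.ext fun a => by
    simp [g.hom.apply_eq_apply_one_mul (u * a)])

lemma ModuleCat.ofHom_mulLeft_inj {a b : R} :
    ModuleCat.ofHom (LinearMap.mulLeft Rᵐᵒᵖ a) = ModuleCat.ofHom (LinearMap.mulLeft Rᵐᵒᵖ b) ↔
      a = b := by
  refine ⟨fun h => ?_, fun h => h ▸ rfl⟩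
  simpa using LinearMap.congr_fun (congrArg ModuleCat.Hom.hom h) 1

lemma ModuleCat.ofHom_mulLeft_comp_ofHom_mulLeft (u v : R) :
    ModuleCat.ofHom (LinearMap.mulLeft Rᵐᵒᵖ u) ≫ ModuleCat.ofHom (LinearMap.mulLeft Rᵐᵒᵖ v)
      = ModuleCat.ofHom (LinearMap.mulLeft Rᵐᵒᵖ (v * u)) :=
  ModuleCat.hom_ext (LinearMap.ext fun a => (mul_assoc v u a).symm)

/-- `Hom(-, R)` turns left multiplications `R → R` into right multiplications. -/
lemma ModuleCat.mulLeft_cocycle_extends_iff (u v : R) :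
    (∀ g : ModuleCat.of Rᵐᵒᵖ R ⟶ ModuleCat.of Rᵐᵒᵖ R,
      ModuleCat.ofHom (LinearMap.mulLeft Rᵐᵒᵖ v) ≫ g = 0 →
        ∃ f : ModuleCat.of Rᵐᵒᵖ R ⟶ ModuleCat.of Rᵐᵒᵖ R,
          ModuleCat.ofHom (LinearMap.mulLeft Rᵐᵒᵖ u) ≫ f = g) ↔
      ∀ a : R, a * v = 0 → ∃ m, m * u = a := by
  have hom_eq (g : ModuleCat.of Rᵐᵒᵖ R ⟶ ModuleCat.of Rᵐᵒᵖ R) :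
      g = ModuleCat.ofHom (LinearMap.mulLeft Rᵐᵒᵖ (g.hom 1)) :=
    ModuleCat.hom_ext (LinearMap.ext fun a => g.hom.apply_eq_apply_one_mul a)
  have zero_eq : (0 : ModuleCat.of Rᵐᵒᵖ R ⟶ ModuleCat.of Rᵐᵒᵖ R)
      = ModuleCat.ofHom (LinearMap.mulLeft Rᵐᵒᵖ 0) := by
    rw [LinearMap.mulLeft_zero_eq_zero]; rfl
  constructor
  · intro h a ha
    obtain ⟨f, hf⟩ := h (ModuleCat.ofHom (LinearMap.mulLeft Rᵐᵒᵖ a))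
      (by rw [ModuleCat.ofHom_mulLeft_comp, zero_eq, ModuleCat.ofHom_mulLeft_inj]; simpa using ha)
    rw [ModuleCat.ofHom_mulLeft_comp, ModuleCat.ofHom_mulLeft_inj] at hf
    exact ⟨f.hom 1, hf⟩
  · intro h g hg
    rw [ModuleCat.ofHom_mulLeft_comp, zero_eq, ModuleCat.ofHom_mulLeft_inj] at hg
    obtain ⟨m, hm⟩ := h (g.hom 1) hg
    refine ⟨ModuleCat.ofHom (LinearMap.mulLeft Rᵐᵒᵖ m), ?_⟩
    rw [ModuleCat.ofHom_mulLeft_comp, hom_eq g, ModuleCat.ofHom_mulLeft_inj]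
    simpa using hm

end RightModuleOverItself

namespace LambdaAlg

variable {k : Type} [Field k] {q : k} {Λ : Type} [Ring Λ] [Algebra k Λ] (D : LambdaAlg k q Λ)

lemma yx_mul_x : D.y * D.x * D.x = 0 := by rw [mul_assoc, D.hxx, mul_zero]
lemma zx_mul_x : D.z * D.x * D.x = 0 := by rw [mul_assoc, D.hxx, mul_zero]
lemma yx_mul_z : D.y * D.x * D.z = 0 := by rw [mul_assoc, D.x_mul_z, ← mul_assoc, D.hyz, zero_mul]
lemma zx_mul_z : D.z * D.x * D.z = 0 := by rw [mul_assoc, D.x_mul_z, ← mul_assoc, D.hzz, zero_mul]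
lemma y_mul_yx : D.y * (D.y * D.x) = 0 := by rw [← mul_assoc, D.hyy, zero_mul]
lemma z_mul_yx : D.z * (D.y * D.x) = 0 := by rw [← mul_assoc, D.z_mul_y, mul_assoc, D.hxx, mul_zero]
lemma y_mul_zx : D.y * (D.z * D.x) = 0 := by rw [← mul_assoc, D.hyz, zero_mul]
lemma z_mul_zx : D.z * (D.z * D.x) = 0 := by rw [← mul_assoc, D.hzz, zero_mul]
lemma x_mul_yx : D.x * (D.y * D.x) = 0 := by
  rw [← mul_assoc, D.x_mul_y, neg_mul, smul_mul_assoc, D.yx_mul_x, smul_zero, neg_zero]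
lemma x_mul_zx : D.x * (D.z * D.x) = 0 := by rw [← mul_assoc, D.x_mul_z, D.zx_mul_x]
lemma yx_mul_y : D.y * D.x * D.y = 0 := by
  rw [mul_assoc, D.x_mul_y, mul_neg, mul_smul_comm, D.y_mul_yx, smul_zero, neg_zero]
lemma zx_mul_y : D.z * D.x * D.y = 0 := by
  rw [mul_assoc, D.x_mul_y, mul_neg, mul_smul_comm, D.z_mul_yx, smul_zero, neg_zero]

lemma exists_eq_basis_sum (a : Λ) : ∃ c₀ c₁ c₂ c₃ c₄ c₅ : k,
    a = c₀ • 1 + c₁ • D.x + c₂ • D.y + c₃ • D.z + c₄ • (D.y * D.x) + c₅ • (D.z * D.x) := by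
  refine ⟨D.basis.repr a 0, D.basis.repr a 1, D.basis.repr a 2, D.basis.repr a 3,
    D.basis.repr a 4, D.basis.repr a 5, ?_⟩
  conv_lhs => rw [← D.basis.sum_repr a]
  rw [Fin.sum_univ_six, D.hb0, D.hb1, D.hb2, D.hb3, D.hb4, D.hb5]

lemma basis_sum_eq_zero {c₀ c₁ c₂ c₃ c₄ c₅ : k}
    (h : c₀ • 1 + c₁ • D.x + c₂ • D.y + c₃ • D.z + c₄ • (D.y * D.x) + c₅ • (D.z * D.x) = 0) :
    c₀ = 0 ∧ c₁ = 0 ∧ c₂ = 0 ∧ c₃ = 0 ∧ c₄ = 0 ∧ c₅ = 0 := by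
  have hc := Fintype.linearIndependent_iff.mp D.basis.linearIndependent ![c₀, c₁, c₂, c₃, c₄, c₅]
    (by simpa [Fin.sum_univ_six, D.hb0, D.hb1, D.hb2, D.hb3, D.hb4, D.hb5] using h)
  exact ⟨hc 0, hc 1, hc 2, hc 3, hc 4, hc 5⟩

section

variable (β γ : k)

lemma w_one : D.w 1 β γ = D.x + β • D.y + γ • D.z := by rw [w, one_smul]

lemma w_mul_basis_sum (c₀ c₁ c₂ c₃ c₄ c₅ : k) :
    D.w 1 β γ * (c₀ • 1 + c₁ • D.x + c₂ • D.y + c₃ • D.z + c₄ • (D.y * D.x)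
      + c₅ • (D.z * D.x)) =
    c₀ • D.w 1 β γ + (c₁ * β - q * c₂) • (D.y * D.x)
      + (c₁ * γ + c₂ * γ + c₃) • (D.z * D.x) := by
  simp only [w_one, mul_add, add_mul, mul_smul_comm, smul_mul_assoc, mul_one,
    D.hxx, D.hyy, D.hzz, D.hyz, D.x_mul_y, D.x_mul_z, D.z_mul_y, D.x_mul_yx, D.x_mul_zx,
    D.y_mul_yx, D.y_mul_zx, D.z_mul_yx, D.z_mul_zx, smul_zero]
  module

lemma basis_sum_mul_w (c₀ c₁ c₂ c₃ c₄ c₅ : k) :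
    (c₀ • 1 + c₁ • D.x + c₂ • D.y + c₃ • D.z + c₄ • (D.y * D.x)
      + c₅ • (D.z * D.x)) * D.w 1 β γ =
    c₀ • D.w 1 β γ + (c₂ - q * β * c₁) • (D.y * D.x)
      + (γ * c₁ + (1 + β) * c₃) • (D.z * D.x) := by
  simp only [w_one, mul_add, add_mul, mul_smul_comm, smul_mul_assoc, one_mul,
    D.hxx, D.hyy, D.hzz, D.hyz, D.x_mul_y, D.x_mul_z, D.z_mul_y, D.yx_mul_x, D.yx_mul_y,
    D.yx_mul_z, D.zx_mul_x, D.zx_mul_y, D.zx_mul_z, smul_zero, smul_neg, smul_smul]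
  module

end

lemma yx_mul_basis_sum (c₀ c₁ c₂ c₃ c₄ c₅ : k) :
    D.y * D.x * (c₀ • 1 + c₁ • D.x + c₂ • D.y + c₃ • D.z + c₄ • (D.y * D.x)
      + c₅ • (D.z * D.x)) = c₀ • (D.y * D.x) := by
  simp only [mul_add, mul_smul_comm, mul_one, ← mul_assoc, D.yx_mul_x, D.yx_mul_y, D.yx_mul_z,
    zero_mul, smul_zero, add_zero]

lemma zx_mul_basis_sum (c₀ c₁ c₂ c₃ c₄ c₅ : k) :
    D.z * D.x * (c₀ • 1 + c₁ • D.x + c₂ • D.y + c₃ • D.z + c₄ • (D.y * D.x)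
      + c₅ • (D.z * D.x)) = c₀ • (D.z * D.x) := by
  simp only [mul_add, mul_smul_comm, mul_one, ← mul_assoc, D.zx_mul_x, D.zx_mul_y, D.zx_mul_z,
    zero_mul, smul_zero, add_zero]

lemma w_mul_yx (β γ : k) : D.w 1 β γ * (D.y * D.x) = 0 := by
  simp only [w_one, add_mul, smul_mul_assoc, D.x_mul_yx, D.y_mul_yx, D.z_mul_yx, smul_zero,
    add_zero]

lemma w_mul_zx (β γ : k) : D.w 1 β γ * (D.z * D.x) = 0 := by
  simp only [w_one, add_mul, smul_mul_assoc, D.x_mul_zx, D.y_mul_zx, D.z_mul_zx, smul_zero,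
    add_zero]

lemma w_mem_U' (β γ : k) : D.w 1 β γ ∈ D.U' 1 β γ := Submodule.subset_span (by simp)

lemma w_mul_mem_U' (β γ : k) (a : Λ) : D.w 1 β γ * a ∈ D.U' 1 β γ :=
  Submodule.smul_mem _ (MulOpposite.op a) (D.w_mem_U' β γ)

lemma eq_zero_of_smul_w_add_eq_zero {β γ r s t : k}
    (h : r • D.w 1 β γ + s • (D.y * D.x) + t • (D.z * D.x) = 0) : r = 0 ∧ s = 0 ∧ t = 0 := by
  obtain ⟨-, hr, -, -, hs, ht⟩ := D.basis_sum_eq_zero (c₀ := 0) (c₂ := r * β) (c₃ := r * γ)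
    (by rw [← h, w_one]; module)
  exact ⟨hr, hs, ht⟩

lemma smul_mem_U' {β γ : k} (r : k) {a : Λ} (ha : a ∈ D.U' 1 β γ) : r • a ∈ D.U' 1 β γ := by
  have : r • a = MulOpposite.op (algebraMap k Λ r) • a := by
    rw [MulOpposite.smul_eq_mul_unop, MulOpposite.unop_op, ← Algebra.commutes, ← Algebra.smul_def]
  exact this ▸ Submodule.smul_mem _ _ ha

lemma mem_U'_iff (β γ : k) (a : Λ) :
    a ∈ D.U' 1 β γ ↔ ∃ r s t : k, a = r • D.w 1 β γ + s • (D.y * D.x) + t • (D.z * D.x) := by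
  constructor
  · intro h
    induction h using Submodule.span_induction with
    | mem v hv =>
      rcases hv with rfl | rfl | rfl
      · exact ⟨1, 0, 0, by module⟩
      · exact ⟨0, 1, 0, by module⟩
      · exact ⟨0, 0, 1, by module⟩
    | zero => exact ⟨0, 0, 0, by module⟩
    | add _ _ _ _ hv hv' =>
      obtain ⟨r, s, t, rfl⟩ := hv
      obtain ⟨r', s', t', rfl⟩ := hv'
      exact ⟨r + r', s + s', t + t', by module⟩
    | smul m _ _ hv =>
      obtain ⟨r, s, t, rfl⟩ := hv
      obtain ⟨c₀, c₁, c₂, c₃, c₄, c₅, hm⟩ := D.exists_eq_basis_sum m.unop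
      rw [MulOpposite.smul_eq_mul_unop, hm]
      simp only [add_mul, smul_mul_assoc, w_mul_basis_sum, yx_mul_basis_sum, zx_mul_basis_sum]
      exact ⟨r * c₀, r * (c₁ * β - q * c₂) + s * c₀, r * (c₁ * γ + c₂ * γ + c₃) + t * c₀,
        by module⟩
  · rintro ⟨r, s, t, rfl⟩
    have gen : ∀ u ∈ ({D.w 1 β γ, D.y * D.x, D.z * D.x} : Set Λ), u ∈ D.U' 1 β γ :=
      fun _ hu => Submodule.subset_span hu
    refine add_mem (add_mem ?_ ?_) ?_ <;> exact D.smul_mem_U' _ (gen _ (by simp))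

lemma w_mul_w_syzygy (hq : q ≠ 0) (β γ : k) :
    D.w 1 β γ * D.w 1 (q⁻¹ * β) (-(1 + q⁻¹ * β) * γ) = 0 := by
  have : D.w 1 (q⁻¹ * β) (-(1 + q⁻¹ * β) * γ) = (0 : k) • 1 + (1 : k) • D.x + (q⁻¹ * β) • D.y
      + (-(1 + q⁻¹ * β) * γ) • D.z + (0 : k) • (D.y * D.x) + (0 : k) • (D.z * D.x) := by
    rw [w_one]; module
  rw [this, w_mul_basis_sum]
  match_scalars <;> field_simp <;> ring

lemma range_mulLeft_w (hq : q ≠ 0) (β γ : k) :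
    LinearMap.range (LinearMap.mulLeft Λᵐᵒᵖ (D.w 1 β γ)) = D.U' 1 β γ := by
  apply le_antisymm
  · rintro _ ⟨a, rfl⟩
    exact D.w_mul_mem_U' β γ a
  · intro a ha
    obtain ⟨r, s, t, rfl⟩ := (D.mem_U'_iff β γ a).mp ha
    refine ⟨r • 1 + (0 : k) • D.x + (-(q⁻¹ * s)) • D.y + (q⁻¹ * s * γ + t) • D.z
      + (0 : k) • (D.y * D.x) + (0 : k) • (D.z * D.x), ?_⟩
    rw [LinearMap.mulLeft_apply, w_mul_basis_sum]
    match_scalars <;> field_simp <;> ring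

lemma ker_mulLeft_w (hq : q ≠ 0) (β γ : k) :
    LinearMap.ker (LinearMap.mulLeft Λᵐᵒᵖ (D.w 1 β γ))
      = D.U' 1 (q⁻¹ * β) (-(1 + q⁻¹ * β) * γ) := by
  apply le_antisymm
  · intro a ha
    obtain ⟨c₀, c₁, c₂, c₃, c₄, c₅, rfl⟩ := D.exists_eq_basis_sum a
    rw [LinearMap.mem_ker, LinearMap.mulLeft_apply, w_mul_basis_sum] at ha
    obtain ⟨h₀, h₄, h₅⟩ := D.eq_zero_of_smul_w_add_eq_zero ha
    have hc₂ : c₂ = c₁ * (q⁻¹ * β) := by field_simp; linear_combination -h₄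
    have hc₃ : c₃ = c₁ * (-(1 + q⁻¹ * β) * γ) := by linear_combination h₅ - γ * hc₂
    refine (D.mem_U'_iff _ _ _).mpr ⟨c₁, c₄, c₅, ?_⟩
    rw [h₀, hc₂, hc₃, w_one]
    module
  · refine Submodule.span_le.mpr ?_
    rintro _ (rfl | rfl | rfl)
    · exact D.w_mul_w_syzygy hq β γ
    · exact D.w_mul_yx β γ
    · exact D.w_mul_zx β γ

lemma exists_mul_w_eq_iff {γ : k} (hγ : γ ≠ 0) (β : k) (a : Λ) :
    (∃ m, m * D.w 1 β γ = a) ↔ a ∈ D.U' 1 β γ := by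
  rw [mem_U'_iff]
  constructor
  · rintro ⟨m, rfl⟩
    obtain ⟨c₀, c₁, c₂, c₃, c₄, c₅, rfl⟩ := D.exists_eq_basis_sum m
    exact ⟨c₀, c₂ - q * β * c₁, γ * c₁ + (1 + β) * c₃, D.basis_sum_mul_w β γ ..⟩
  · rintro ⟨r, s, t, rfl⟩
    refine ⟨r • 1 + (t * γ⁻¹) • D.x + (s + t * γ⁻¹ * q * β) • D.y + (0 : k) • D.z
      + (0 : k) • (D.y * D.x) + (0 : k) • (D.z * D.x), ?_⟩
    rw [basis_sum_mul_w]
    match_scalars <;> field_simp [hγ] <;> ring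

lemma z_not_mem_U' (β γ : k) : D.z ∉ D.U' 1 β γ := by
  rw [mem_U'_iff]
  rintro ⟨r, s, t, h⟩
  rw [w_one] at h
  obtain ⟨-, hr, -, h₃, -, -⟩ := D.basis_sum_eq_zero (c₀ := 0) (c₁ := -r) (c₂ := -(r * β))
    (c₃ := 1 - r * γ) (c₄ := -s) (c₅ := -t) (by linear_combination (norm := module) h)
  rw [neg_eq_zero.mp hr, zero_mul, sub_zero] at h₃
  exact one_ne_zero h₃

lemma z_mul_w_of_add_eq_zero {β : k} (hβ : 1 + β = 0) (γ : k) : D.z * D.w 1 β γ = 0 := by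
  have : D.z = (0 : k) • 1 + (0 : k) • D.x + (0 : k) • D.y + (1 : k) • D.z
      + (0 : k) • (D.y * D.x) + (0 : k) • (D.z * D.x) := by module
  rw [this, basis_sum_mul_w, hβ]
  module

lemma mul_z_eq_zero_of_mul_w_eq_zero {γ : k} (hγ : γ ≠ 0) {u : Λ}
    (h : u * D.w 1 (-1) γ = 0) : u * D.z = 0 := by
  obtain ⟨c₀, c₁, c₂, c₃, c₄, c₅, rfl⟩ := D.exists_eq_basis_sum u
  rw [basis_sum_mul_w] at h
  obtain ⟨h₀, h₄, h₅⟩ := D.eq_zero_of_smul_w_add_eq_zero h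
  have hc₁ : c₁ = 0 := by simpa [hγ] using h₅
  have hc₂ : c₂ = 0 := by simpa [hc₁] using h₄
  simp only [h₀, hc₁, hc₂, zero_smul, zero_add, add_mul, smul_mul_assoc, D.hzz, D.yx_mul_z,
    D.zx_mul_z, smul_zero, add_zero]

lemma mem_U'_of_mul_w_syzygy_eq_zero (hq : q ≠ 0) {b : k} (hb : 1 + q⁻¹ * b ≠ 0) (c : k)
    {u : Λ} (h : u * D.w 1 (q⁻¹ * b) (-(1 + q⁻¹ * b) * c) = 0) : u ∈ D.U' 1 b c := by
  obtain ⟨c₀, c₁, c₂, c₃, c₄, c₅, rfl⟩ := D.exists_eq_basis_sum u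
  rw [basis_sum_mul_w] at h
  obtain ⟨h₀, h₄, h₅⟩ := D.eq_zero_of_smul_w_add_eq_zero h
  have hc₂ : c₂ = b * c₁ := by field_simp at h₄; linear_combination h₄
  have hc₃ : c₃ = c * c₁ :=
    sub_eq_zero.mp ((mul_eq_zero.mp (by linear_combination h₅)).resolve_left hb)
  rw [mem_U'_iff]
  refine ⟨c₁, c₄, c₅, ?_⟩
  rw [h₀, hc₂, hc₃, w_one]
  module

noncomputable def U'EquivM'Omega (hq : q ≠ 0) (b c : k) :
    D.U' 1 b c ≃ₗ[Λᵐᵒᵖ] D.M' 1 (q⁻¹ * b) (-(1 + q⁻¹ * b) * c) :=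
  ((LinearEquiv.ofEq _ _ (D.range_mulLeft_w hq b c)).symm ≪≫ₗ
    (LinearMap.quotKerEquivRange _).symm) ≪≫ₗ
      Submodule.quotEquivOfEq _ _ (D.ker_mulLeft_w hq b c)

lemma exists_injective_M'_of_ne_neg_one (hq : q ≠ 0) {b : k} (hb : b ≠ -1) (c : k) :
    ∃ (n : ℕ) (f : D.M' 1 b c →ₗ[Λᵐᵒᵖ] (Fin n → Λ)), Function.Injective f := by
  have hb' : 1 + b ≠ 0 := fun h => hb (eq_neg_of_add_eq_zero_right h)
  have hker : D.U' 1 b c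
      = LinearMap.ker (LinearMap.mulLeft Λᵐᵒᵖ (D.w 1 (q * b) (-(c / (1 + b))))) := by
    rw [ker_mulLeft_w D hq, inv_mul_cancel_left₀ hq]
    congr
    field_simp
  let f := (D.U' 1 b c).liftQ _ hker.le
  have hf : Function.Injective f := LinearMap.ker_eq_bot.mp (Submodule.ker_liftQ_eq_bot' _ _ hker)
  exact ⟨1, LinearMap.pi fun _ => f, fun a a' h => hf (congrFun h 0)⟩

lemma not_exists_injective_M'_neg_one {c : k} (hc : c ≠ 0) :
    ¬ ∃ (n : ℕ) (f : D.M' 1 (-1) c →ₗ[Λᵐᵒᵖ] (Fin n → Λ)), Function.Injective f := by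
  rintro ⟨n, f, hf⟩
  have hw : f (Submodule.Quotient.mk (D.w 1 (-1) c)) = 0 := by
    rw [(Submodule.Quotient.mk_eq_zero (D.U' 1 (-1) c)).mpr (D.w_mem_U' _ _), map_zero]
  have hz : f (Submodule.Quotient.mk D.z) = 0 := by
    rw [Submodule.Quotient.mk_eq_op_smul_mk_one, map_smul] at hw ⊢
    funext i
    exact D.mul_z_eq_zero_of_mul_w_eq_zero hc (congrFun hw i)
  exact D.z_not_mem_U' (-1) c
    ((Submodule.Quotient.mk_eq_zero (D.U' 1 (-1) c)).mp (hf (hz.trans (map_zero f).symm)))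

/-- `(1, β_n, γ_n) = ω′ⁿ(1, b, c)`. -/
def resolutionParams (q b c : k) : ℕ → k × k
  | 0 => (b, c)
  | n + 1 => (q⁻¹ * (resolutionParams q b c n).1,
      -(1 + q⁻¹ * (resolutionParams q b c n).1) * (resolutionParams q b c n).2)

lemma w_resolutionParams_mul_succ (hq : q ≠ 0) (b c : k) (n : ℕ) :
    D.w 1 (resolutionParams q b c n).1 (resolutionParams q b c n).2
      * D.w 1 (resolutionParams q b c (n + 1)).1 (resolutionParams q b c (n + 1)).2 = 0 :=
  D.w_mul_w_syzygy hq _ _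

noncomputable def resolutionComplex (hq : q ≠ 0) (b c : k) : ChainComplex (ModuleCat Λᵐᵒᵖ) ℕ :=
  ChainComplex.of (fun _ => ModuleCat.of Λᵐᵒᵖ Λ)
    (fun n => ModuleCat.ofHom (LinearMap.mulLeft Λᵐᵒᵖ
      (D.w 1 (resolutionParams q b c n).1 (resolutionParams q b c n).2)))
    (fun n => by
      rw [ModuleCat.ofHom_mulLeft_comp_ofHom_mulLeft,
        D.w_resolutionParams_mul_succ hq, LinearMap.mulLeft_zero_eq_zero]
      rfl)

lemma resolutionComplex_d (hq : q ≠ 0) (b c : k) (n : ℕ) :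
    (D.resolutionComplex hq b c).d (n + 1) n = ModuleCat.ofHom (LinearMap.mulLeft Λᵐᵒᵖ
      (D.w 1 (resolutionParams q b c n).1 (resolutionParams q b c n).2)) := by
  simp [resolutionComplex]

noncomputable def projectiveResolution (hq : q ≠ 0) (b c : k) :
    ProjectiveResolution (ModuleCat.of Λᵐᵒᵖ (D.M' 1 b c)) :=
  ProjectiveResolution.ofExact (D.resolutionComplex hq b c) (ModuleCat.ofHom (D.U' 1 b c).mkQ)
    (projective := fun _ => ModuleCat.projective_self_op)
    (epi := (ModuleCat.epi_iff_surjective _).mpr (Submodule.mkQ_surjective _))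
    (by
      rw [resolutionComplex_d]
      exact ModuleCat.hom_ext (LinearMap.ext fun a =>
        (Submodule.Quotient.mk_eq_zero _).mpr (D.w_mul_mem_U' _ _ a)))
    (by
      rw [ShortComplex.moduleCat_exact_iff_range_eq_ker]
      exact (congrArg (fun f => LinearMap.range (ModuleCat.Hom.hom f))
        (D.resolutionComplex_d hq b c 0)).trans
          ((D.range_mulLeft_w hq b c).trans (Submodule.ker_mkQ _).symm))
    (fun n => by
      rw [HomologicalComplex.exactAt_iff' _ (n + 2) (n + 1) n (by simp) (by simp),
        ShortComplex.moduleCat_exact_iff_range_eq_ker]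
      change LinearMap.range ((D.resolutionComplex hq b c).d (n + 1 + 1) (n + 1)).hom
        = LinearMap.ker ((D.resolutionComplex hq b c).d (n + 1) n).hom
      rw [resolutionComplex_d, resolutionComplex_d]
      exact (D.range_mulLeft_w hq _ _).trans (D.ker_mulLeft_w hq _ _).symm)

lemma isZero_ext_one_M'_iff (hq : q ≠ 0) (b c : k) :
    IsZero (((Ext k (ModuleCat Λᵐᵒᵖ) 1).obj
        (op (ModuleCat.of Λᵐᵒᵖ (D.M' 1 b c)))).obj (ModuleCat.of Λᵐᵒᵖ Λ)) ↔
      ∀ a : Λ, a * D.w 1 (q⁻¹ * b) (-(1 + q⁻¹ * b) * c) = 0 → ∃ m, m * D.w 1 b c = a := by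
  rw [(D.projectiveResolution hq b c).isZero_ext_succ_iff 0]
  change (∀ g : ModuleCat.of Λᵐᵒᵖ Λ ⟶ ModuleCat.of Λᵐᵒᵖ Λ,
    (D.resolutionComplex hq b c).d (1 + 1) 1 ≫ g = 0 →
      ∃ f : ModuleCat.of Λᵐᵒᵖ Λ ⟶ ModuleCat.of Λᵐᵒᵖ Λ,
        (D.resolutionComplex hq b c).d (0 + 1) 0 ≫ f = g) ↔ _
  simp only [resolutionComplex_d]
  exact ModuleCat.mulLeft_cocycle_extends_iff _ _

end LambdaAlg

/-- For `c ≠ 0`: the right module `M′(1,b,c)` is torsionless iff `b ≠ −1`;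
`Ext¹(M′(1,b,c), Λ) = 0` in right `Λ`-modules iff `b ≠ −q`; and if `b ≠ −q` then
`U′(1,b,c) ≅ M′(ω′(1,b,c)) = M′(1, q⁻¹b, −(1+q⁻¹b)c)` as right `Λ`-modules. -/
theorem statement19 (k : Type) [Field k] (q : k) (hq : q ≠ 0)
    (Λ : Type) [Ring Λ] [Algebra k Λ] (D : LambdaAlg k q Λ)
    (b c : k) (hc : c ≠ 0) :
    ((∃ (n : ℕ) (f : D.M' 1 b c →ₗ[Λᵐᵒᵖ] (Fin n → Λ)), Function.Injective f)
       ↔ b ≠ -1)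
    ∧ (IsZero (((Ext k (ModuleCat Λᵐᵒᵖ) 1).obj
          (op (ModuleCat.of Λᵐᵒᵖ (D.M' 1 b c)))).obj (ModuleCat.of Λᵐᵒᵖ Λ))
       ↔ b ≠ -q)
    ∧ (b ≠ -q →
        Nonempty (↥(D.U' 1 b c) ≃ₗ[Λᵐᵒᵖ] D.M' 1 (q⁻¹ * b) (-(1 + q⁻¹ * b) * c))) := by
  have hbq : 1 + q⁻¹ * b = 0 ↔ b = -q := by
    rw [← mul_right_inj' hq, mul_add, mul_inv_cancel_left₀ hq, mul_one, mul_zero,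
      add_comm, add_eq_zero_iff_eq_neg]
  refine ⟨⟨fun h hb => D.not_exists_injective_M'_neg_one hc (hb ▸ h),
      fun hb => D.exists_injective_M'_of_ne_neg_one hq hb c⟩, ?_,
    fun _ => ⟨D.U'EquivM'Omega hq b c⟩⟩
  rw [D.isZero_ext_one_M'_iff hq]
  constructor
  · intro h hb
    obtain ⟨m, hm⟩ := h D.z (D.z_mul_w_of_add_eq_zero (hbq.mpr hb) _)
    exact D.z_not_mem_U' b c ((D.exists_mul_w_eq_iff hc b D.z).mp ⟨m, hm⟩)
  · intro hb a ha
    exact (D.exists_mul_w_eq_iff hc b a).mpr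
      (D.mem_U'_of_mul_w_syzygy_eq_zero hq (hb ∘ hbq.mp) c ha)
end
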